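/- For every vector w ∈ ℂ^N with ‖w‖ = 1, the expectation over θ drawn uniformly from [−π, π] satisfies E_θ[ |Σ_{j=0}^{N−1} x_j(θ)·conj(w_j)|² ] = 1/N. -/

import Mathlib

open Real Finset

/-- The random vector `x(θ) ∈ ℝ^N`: with `n = ⌈log₂ N⌉` and `ω_j = 2^j`,
`x_i(θ) = √(2^n/N) ∏_{j=1}^n cos(ω_j θ)^{1−b_{ij}} sin(ω_j θ)^{b_{ij}}`, where
`b_{i1}…b_{in}` is the `n`-bit binary representation of `i` (`b_{i1}` most significant). -/
noncomputable def xvec (N : ℕ) (θ : ℝ) (i : Fin N) : ℝ :=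
  Real.sqrt ((2 : ℝ) ^ (Nat.clog 2 N) / N) *
    ∏ j ∈ Finset.Icc 1 (Nat.clog 2 N),
      if i.val / 2 ^ (Nat.clog 2 N - j) % 2 = 1
      then Real.sin ((2 : ℝ) ^ j * θ)
      else Real.cos ((2 : ℝ) ^ j * θ)

lemma exp_int_integral (m : ℤ) :
    ∫ θ in (-π)..π, Complex.exp ((m:ℂ) * θ * Complex.I) = if m = 0 then (2*π:ℂ) else 0 := by
  rcases eq_or_ne m 0 with h|h
  · subst h; simp; ring
  · rw [if_neg h]
    have h1 : ∀ θ:ℝ, (m:ℂ) * θ * Complex.I = (m * Complex.I) * θ := fun θ => by ring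
    simp_rw [h1]
    rw [integral_exp_mul_complex
      (mul_ne_zero (Int.cast_ne_zero.mpr h) Complex.I_ne_zero)]
    have e1 : Complex.exp ((m:ℂ) * Complex.I * π) = Complex.cos ((m:ℝ)*π) := by
      rw [show (m:ℂ) * Complex.I * π = (((m:ℝ)*π:ℝ):ℂ) * Complex.I by push_cast; ring,
        Complex.exp_mul_I, ← Complex.ofReal_sin]
      rw [show ((m:ℝ)*π) = ((m:ℤ):ℝ)*π by norm_num, Real.sin_int_mul_pi]
      push_cast; ring
    have e2 : Complex.exp ((m:ℂ) * Complex.I * (-π:ℝ)) = Complex.cos ((m:ℝ)*π) := by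
      rw [show (m:ℂ) * Complex.I * (-π:ℝ) = ((-((m:ℝ)*π):ℝ):ℂ) * Complex.I by push_cast; ring,
        Complex.exp_mul_I, ← Complex.ofReal_sin, ← Complex.ofReal_cos]
      rw [show (-((m:ℝ)*π)) = ((-m:ℤ):ℝ)*π by push_cast; ring, Real.sin_int_mul_pi]
      push_cast; ring_nf; rw [show (-(↑m * ↑π) : ℂ) = -(↑m * ↑π) from rfl, Complex.cos_neg]
    rw [e1, e2]; simp
open Real Finset

noncomputable def dcoef (a b : Bool) (ε : ℤ) : ℂ :=
  if ε = 0 then (if a = b then 1/2 else 0)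
  else if a = b then (if a then -(1/4) else (1/4))
  else (ε : ℂ) * (-(Complex.I)/4)

lemma pair_expand (a b : Bool) (t : ℝ) :
    (((if a then Real.sin t else Real.cos t) * (if b then Real.sin t else Real.cos t) : ℝ) : ℂ)
      = ∑ ε ∈ ({-1,0,1} : Finset ℤ), dcoef a b ε * Complex.exp ((ε:ℂ) * (2*t) * Complex.I) := by
  have huv : Complex.exp (↑t * Complex.I) * Complex.exp (-(↑t * Complex.I)) = 1 := by
    rw [← Complex.exp_add]; simp
  have hu : Complex.exp (((1:ℤ):ℂ) * (2*t) * Complex.I)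
      = Complex.exp (↑t * Complex.I) * Complex.exp (↑t * Complex.I) := by
    rw [← Complex.exp_add]; push_cast; ring_nf
  have hv : Complex.exp (((-1:ℤ):ℂ) * (2*t) * Complex.I)
      = Complex.exp (-(↑t * Complex.I)) * Complex.exp (-(↑t * Complex.I)) := by
    rw [← Complex.exp_add]; push_cast; ring_nf
  have hc : (Real.cos t : ℂ)
      = (Complex.exp (↑t * Complex.I) + Complex.exp (-(↑t * Complex.I))) / 2 := by
    rw [Complex.exp_mul_I, show -(↑t*Complex.I) = ((-t:ℝ):ℂ)*Complex.I by push_cast; ring,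
      Complex.exp_mul_I, Complex.ofReal_cos]
    push_cast [Complex.cos_neg, Complex.sin_neg]; ring
  have hs : (Real.sin t : ℂ)
      = (Complex.exp (↑t * Complex.I) - Complex.exp (-(↑t * Complex.I))) * (-Complex.I) / 2 := by
    rw [Complex.exp_mul_I, show -(↑t*Complex.I) = ((-t:ℝ):ℂ)*Complex.I by push_cast; ring,
      Complex.exp_mul_I, Complex.ofReal_sin]
    push_cast [Complex.cos_neg, Complex.sin_neg]
    linear_combination (Complex.sin (t:ℂ)) * Complex.I_sq
  have hE : ({-1,0,1} : Finset ℤ) = insert (-1) (insert 0 {1}) := rfl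
  rw [hE, Finset.sum_insert (by decide), Finset.sum_insert (by decide), Finset.sum_singleton]
  rw [hu, hv]
  set u := Complex.exp (↑t * Complex.I)
  set v := Complex.exp (-(↑t * Complex.I))
  clear_value u v
  cases a <;> cases b <;>
    simp only [if_true, if_false, Bool.false_eq_true, Bool.true_eq_false, dcoef,
      reduceIte, Complex.ofReal_mul, hc, hs] <;>
    push_cast <;>
    simp only [zero_mul, Complex.exp_zero]
  · linear_combination (1/2:ℂ) * huv
  · ring
  · ring
  · linear_combination ((u-v)^2/4) * Complex.I_sq + (1/2:ℂ) * huv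

lemma geom2 (m : ℕ) : ∑ k ∈ range m, (2:ℤ)^k = 2^m - 1 := by
  induction m with
  | zero => simp
  | succ m ih => rw [Finset.sum_range_succ, ih]; ring

lemma dyadic (S : Finset ℕ) (f : ℕ → ℤ) (hf : ∀ k ∈ S, |f k| ≤ 1)
    (h : ∑ k ∈ S, f k * 2^k = 0) : ∀ k ∈ S, f k = 0 := by
  induction S using Finset.strongInduction with
  | _ S ih =>
    rcases S.eq_empty_or_nonempty with rfl|hS
    · simp
    · set m := S.max' hS with hm
      have hmS : m ∈ S := S.max'_mem hS
      have hsub : S.erase m ⊂ S := Finset.erase_ssubset hmS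
      have hsplit : f m * 2^m + ∑ k ∈ S.erase m, f k * 2^k = 0 := by
        have h' := (Finset.sum_erase_add S (fun k => f k * 2^k) hmS).trans h
        linarith
      have hbound : |∑ k ∈ S.erase m, f k * 2^k| ≤ 2^m - 1 := by
        calc |∑ k ∈ S.erase m, f k * 2^k| ≤ ∑ k ∈ S.erase m, |f k * 2^k| :=
              Finset.abs_sum_le_sum_abs _ _
          _ ≤ ∑ k ∈ S.erase m, 2^k := by
              apply Finset.sum_le_sum
              intro k hk
              rw [abs_mul, abs_pow]
              calc |f k| * |(2:ℤ)|^k ≤ 1 * |(2:ℤ)|^k := by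
                    apply mul_le_mul_of_nonneg_right (hf k (Finset.mem_of_mem_erase hk))
                      (by positivity)
                _ = 2^k := by norm_num
          _ ≤ ∑ k ∈ range m, 2^k := by
              apply Finset.sum_le_sum_of_subset_of_nonneg
              · intro k hk
                rw [Finset.mem_range]
                rcases Finset.mem_erase.mp hk with ⟨hne, hkS⟩
                exact lt_of_le_of_ne (S.le_max' k hkS) hne
              · intro k _ _; positivity
          _ = 2^m - 1 := geom2 m
      have hfm : f m = 0 := by
        by_contra hne
        have h1 : 1 ≤ |f m| := Int.one_le_abs (by simpa using hne)
        have h2 : (2:ℤ)^m ≤ |f m * 2^m| := by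
          rw [abs_mul, abs_pow]
          calc (2:ℤ)^m = 1 * |(2:ℤ)|^m := by norm_num
            _ ≤ |f m| * |(2:ℤ)|^m := by
                apply mul_le_mul_of_nonneg_right h1 (by positivity)
        have h3 : f m * 2^m = -∑ k ∈ S.erase m, f k * 2^k := by linarith
        rw [h3, abs_neg] at h2
        linarith
      intro k hk
      rcases eq_or_ne k m with rfl|hkm
      · exact hfm
      · refine ih _ hsub (fun k hk => hf k (Finset.mem_of_mem_erase hk)) ?_ k
          (Finset.mem_erase.mpr ⟨hkm, hk⟩)
        rw [hfm] at hsplit; simpa using hsplit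

lemma prod_sum_integral (n : ℕ) (a b : ℕ → Bool) :
    (∫ θ in (-π)..π, ∏ k ∈ Icc 1 n, ∑ ε ∈ ({-1,0,1}:Finset ℤ),
        dcoef (a k) (b k) ε * Complex.exp (((ε * 2^(k+1) : ℤ):ℂ) * θ * Complex.I))
      = (2*π) * ∏ k ∈ Icc 1 n, (if a k = b k then (1/2:ℂ) else 0) := by
  have hterm : ∀ (p : (k : ℕ) → k ∈ Icc 1 n → ℤ) (θ : ℝ),
      (∏ x ∈ (Icc 1 n).attach, (dcoef (a x.1) (b x.1) (p x.1 x.2) *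
        Complex.exp ((((p x.1 x.2) * 2^(x.1+1) : ℤ):ℂ) * θ * Complex.I)))
      = (∏ x ∈ (Icc 1 n).attach, dcoef (a x.1) (b x.1) (p x.1 x.2)) *
        Complex.exp (((∑ x ∈ (Icc 1 n).attach, p x.1 x.2 * 2^(x.1+1) : ℤ):ℂ) * θ * Complex.I) := by
    intro p θ
    rw [Finset.prod_mul_distrib]
    congr 1
    rw [← Complex.exp_sum]
    congr 1
    push_cast
    rw [← Finset.sum_mul, ← Finset.sum_mul]
  simp_rw [Finset.prod_sum, hterm]
  rw [intervalIntegral.integral_finset_sum (by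
    intro p _
    apply Continuous.intervalIntegrable
    exact continuous_const.mul (Complex.continuous_exp.comp
      ((continuous_const.mul Complex.continuous_ofReal).mul continuous_const)))]
  simp_rw [intervalIntegral.integral_const_mul, exp_int_integral]
  rw [Finset.sum_eq_single (fun _ _ => (0:ℤ))]
  · simp only [zero_mul, Finset.sum_const_zero, Int.cast_zero, if_pos rfl]
    have : ∀ x ∈ (Icc 1 n).attach, dcoef (a x.1) (b x.1) 0 = (if a x.1 = b x.1 then (1/2:ℂ) else 0) := by
      intro x _; simp [dcoef]
    rw [Finset.prod_congr rfl this, Finset.prod_attach (Icc 1 n) (fun k => if a k = b k then (1/2:ℂ) else 0)]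
    norm_num
    ring
  · intro p hp hne
    rw [if_neg, mul_zero]
    intro hM
    apply hne
    set f' : ℕ → ℤ := fun k => if h : k ∈ Icc 1 n then p k h else 0 with hf'
    have hMf : (∑ x ∈ (Icc 1 n).attach, p x.1 x.2 * 2^(x.1+1)) = ∑ k ∈ Icc 1 n, f' k * 2^(k+1) := by
      rw [← Finset.sum_attach (Icc 1 n) (fun k => f' k * 2^(k+1))]
      apply Finset.sum_congr rfl
      intro x _
      simp only [hf']
      rw [dif_pos x.2]
    have h2 : (∑ k ∈ Icc 1 n, f' k * 2^k) * 2 = 0 := by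
      rw [Finset.sum_mul, ← hM, hMf]
      apply Finset.sum_congr rfl
      intro k _
      ring
    have h3 : ∑ k ∈ Icc 1 n, f' k * 2^k = 0 := by
      rcases mul_eq_zero.mp h2 with h|h
      · exact h
      · norm_num at h
    have h4 : ∀ k ∈ Icc 1 n, f' k = 0 := by
      apply dyadic _ _ _ h3
      intro k hk
      have := Finset.mem_pi.mp hp k hk
      simp only [Finset.mem_insert, Finset.mem_singleton] at this
      simp only [hf', dif_pos hk]
      rcases this with h|h|h <;> rw [h] <;> norm_num
    funext k hk
    have h5 := h4 k hk
    simp only [hf'] at h5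
    rwa [dif_pos hk] at h5
  · intro h
    exact absurd (Finset.mem_pi.mpr (fun k hk => by norm_num)) h

lemma xvec_orth (N : ℕ) (hN : 1 ≤ N) (i j : Fin N) :
    ∫ θ in (-π)..π, xvec N θ i * xvec N θ j = if i = j then 2*π/(N:ℝ) else 0 := by
  have hN0 : (N:ℝ) ≠ 0 := Nat.cast_ne_zero.mpr (by omega)
  set n := Nat.clog 2 N with hn
  set A : Fin N → ℕ → Bool := fun i k => decide (i.val / 2^(n-k) % 2 = 1) with hA
  have key : ∀ θ : ℝ, ((xvec N θ i * xvec N θ j : ℝ) : ℂ)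
      = (((2:ℝ)^n / N : ℝ) : ℂ) * ∏ k ∈ Icc 1 n, ∑ ε ∈ ({-1,0,1}:Finset ℤ),
          dcoef (A i k) (A j k) ε * Complex.exp (((ε * 2^(k+1) : ℤ):ℂ) * θ * Complex.I) := by
    intro θ
    have h1 : xvec N θ i * xvec N θ j = ((2:ℝ)^n / N) *
        ∏ k ∈ Icc 1 n, ((if A i k then Real.sin ((2:ℝ)^k*θ) else Real.cos ((2:ℝ)^k*θ)) *
          (if A j k then Real.sin ((2:ℝ)^k*θ) else Real.cos ((2:ℝ)^k*θ))) := by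
      unfold xvec
      rw [mul_mul_mul_comm, Real.mul_self_sqrt (by positivity), ← Finset.prod_mul_distrib]
      simp only [hA, decide_eq_true_eq, ← hn]
    rw [h1, Complex.ofReal_mul, Complex.ofReal_prod]
    congr 1
    apply Finset.prod_congr rfl
    intro k _
    rw [pair_expand (A i k) (A j k) ((2:ℝ)^k*θ)]
    apply Finset.sum_congr rfl
    intro ε _
    congr 1
    push_cast
    ring
  have hC : ((∫ θ in (-π)..π, xvec N θ i * xvec N θ j : ℝ) : ℂ)
      = (((if i = j then 2*π/(N:ℝ) else 0) : ℝ) : ℂ) := by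
    rw [← intervalIntegral.integral_ofReal]
    simp_rw [key]
    rw [intervalIntegral.integral_const_mul, prod_sum_integral n (A i) (A j)]
    by_cases hij : i = j
    · subst hij
      simp only [if_pos rfl, eq_self_iff_true, if_true]
      rw [Finset.prod_const, Nat.card_Icc]
      have h2n : ((1:ℂ)/2)^n * 2^n = 1 := by rw [← mul_pow]; norm_num
      push_cast
      linear_combination (2*(π:ℂ)/(N:ℂ)) * h2n
    · rw [if_neg hij]
      have hex : ∃ k ∈ Icc 1 n, A i k ≠ A j k := by
        by_contra hcon
        push_neg at hcon
        apply hij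
        apply Fin.ext
        apply Nat.eq_of_testBit_eq
        intro t
        rcases lt_or_ge t n with ht|ht
        · have hk : n - t ∈ Icc 1 n := by rw [Finset.mem_Icc]; omega
          have h2 := hcon (n - t) hk
          have hnt : n - (n - t) = t := by omega
          simp only [hA, hnt] at h2
          rw [Nat.testBit_eq_decide_div_mod_eq, Nat.testBit_eq_decide_div_mod_eq]
          exact h2
        · have hi : i.val < 2^t :=
            lt_of_lt_of_le (lt_of_lt_of_le i.isLt (Nat.le_pow_clog (by norm_num) N))
              (Nat.pow_le_pow_right (by norm_num) ht)
          have hj : j.val < 2^t :=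
            lt_of_lt_of_le (lt_of_lt_of_le j.isLt (Nat.le_pow_clog (by norm_num) N))
              (Nat.pow_le_pow_right (by norm_num) ht)
          rw [Nat.testBit_lt_two_pow hi, Nat.testBit_lt_two_pow hj]
      obtain ⟨k, hk, hab⟩ := hex
      rw [Finset.prod_eq_zero hk (show (if A i k = A j k then (1/2:ℂ) else 0) = 0 by
        rw [if_neg hab])]
      simp
  exact_mod_cast hC

lemma xvec_cont (N : ℕ) (i : Fin N) : Continuous (fun θ => xvec N θ i) := by
  unfold xvec
  apply Continuous.mul continuous_const
  apply continuous_finset_prod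
  intro k _
  rcases em (i.val / 2 ^ (Nat.clog 2 N - k) % 2 = 1) with h|h
  · simp only [if_pos h]; fun_prop
  · simp only [if_neg h]; fun_prop

/-- For every `w ∈ ℂ^N` with `‖w‖ = 1` (Euclidean norm), the expectation over
`θ` uniform on `[−π, π]` satisfies `E_θ[|Σ_j x_j(θ) conj(w_j)|²] = 1/N`. -/
theorem stmt_3 (N : ℕ) (hN : 1 ≤ N) (w : Fin N → ℂ)
    (hw : ∑ j, ‖w j‖ ^ 2 = 1) :
    (2 * Real.pi)⁻¹ *
        ∫ θ in (-Real.pi)..Real.pi,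
          ‖∑ j, (xvec N θ j : ℂ) * (starRingEnd ℂ) (w j)‖ ^ 2 = 1 / N := by

  have habs : ∀ θ : ℝ, ‖∑ j, (xvec N θ j : ℂ) * (starRingEnd ℂ) (w j)‖ ^ 2
      = ∑ j, ∑ k, (xvec N θ j * xvec N θ k) * ((starRingEnd ℂ) (w j) * w k).re := by
    intro θ
    rw [Complex.sq_norm]
    have h1 : Complex.normSq (∑ j, (xvec N θ j : ℂ) * (starRingEnd ℂ) (w j))
        = ((∑ j, (xvec N θ j : ℂ) * (starRingEnd ℂ) (w j)) *
          (starRingEnd ℂ) (∑ j, (xvec N θ j : ℂ) * (starRingEnd ℂ) (w j))).re := by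
      rw [Complex.mul_conj]; simp
    rw [h1, map_sum]
    simp only [map_mul, Complex.conj_conj, Complex.conj_ofReal]
    rw [Finset.sum_mul_sum, Complex.re_sum]
    apply Finset.sum_congr rfl
    intro j _
    rw [Complex.re_sum]
    apply Finset.sum_congr rfl
    intro k _
    rw [show ((xvec N θ j : ℂ) * (starRingEnd ℂ) (w j)) * ((xvec N θ k : ℂ) * w k)
        = ((xvec N θ j * xvec N θ k : ℝ) : ℂ) * ((starRingEnd ℂ) (w j) * w k) by
      push_cast; ring]
    rw [Complex.re_ofReal_mul]
  simp_rw [habs]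
  rw [intervalIntegral.integral_finset_sum (by
    intro j _
    apply Continuous.intervalIntegrable
    apply continuous_finset_sum
    intro k _
    exact ((xvec_cont N j).mul (xvec_cont N k)).mul continuous_const)]
  have hswap : ∀ j : Fin N,
      (∫ θ in (-π)..π, ∑ k, (xvec N θ j * xvec N θ k) * ((starRingEnd ℂ) (w j) * w k).re)
      = ∑ k, (if j = k then 2*π/(N:ℝ) else 0) * ((starRingEnd ℂ) (w j) * w k).re := by
    intro j
    rw [intervalIntegral.integral_finset_sum (by
      intro k _
      apply Continuous.intervalIntegrable
      exact ((xvec_cont N j).mul (xvec_cont N k)).mul continuous_const)]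
    apply Finset.sum_congr rfl
    intro k _
    rw [intervalIntegral.integral_mul_const, xvec_orth N hN j k]
  simp_rw [hswap]
  have hdiag : ∀ j : Fin N,
      (∑ k, (if j = k then 2*π/(N:ℝ) else 0) * ((starRingEnd ℂ) (w j) * w k).re)
      = 2*π/(N:ℝ) * ‖w j‖ ^ 2 := by
    intro j
    rw [Finset.sum_eq_single j]
    · rw [if_pos rfl]
      congr 1
      have h2 : (starRingEnd ℂ) (w j) * w j = ((‖w j‖^2 : ℝ) : ℂ) := by
        rw [Complex.conj_mul']; push_cast; rfl
      rw [h2, Complex.ofReal_re]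
    · intro k _ hk
      rw [if_neg (Ne.symm hk), zero_mul]
    · intro h; exact absurd (Finset.mem_univ j) h
  simp_rw [hdiag]
  rw [← Finset.mul_sum, hw, mul_one]
  have hπ : (2 * π) ≠ 0 := by positivity
  field_simp
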